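/- Let n be even and suppose that for every (n−2)-admissible list M′ there is an (M′)-decomposition of K_{n−2}. If the list (M, 5^{n−2}) obtained from M by adjoining n−2 occurrences of 5 is an n-ancestor list with ν_n(M) = 0, then there is an (M, 5^{n−2})-decomposition of K_n. -/

import Mathlib

open SimpleGraph

/-- A subgraph `H` of a graph is a cycle with `m` edges: it is connected,
every vertex of `H` has exactly two neighbours in `H`, and `H` has `m` edges. -/
def IsCycleSub {V : Type*} {G : SimpleGraph V} (H : G.Subgraph) (m : ℕ) : Prop :=
  H.coe.Connected ∧ (∀ v ∈ H.verts, (H.neighborSet v).ncard = 2) ∧ H.edgeSet.ncard = m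

/-- An `(M)`-decomposition of an even graph `G`: a family of cycles, with lengths
given by the entries of the list `M`, whose edge sets partition the edge set of `G`. -/
def CycleDecomp {V : Type*} (G : SimpleGraph V) (M : List ℕ) : Prop :=
  ∃ f : Fin M.length → G.Subgraph,
    (∀ i, IsCycleSub (f i) (M.get i)) ∧
    (∀ i j, i ≠ j → Disjoint (f i).edgeSet (f j).edgeSet) ∧
    (⋃ i, (f i).edgeSet) = G.edgeSet

/-- An `(M)`-decomposition of an odd graph `G`: a family of cycles with lengths given by
the entries of `M`, together with a perfect matching, whose edge sets partition `G`. -/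
def CycleDecompM {V : Type*} (G : SimpleGraph V) (M : List ℕ) : Prop :=
  ∃ (f : Fin M.length → G.Subgraph) (I : G.Subgraph),
    I.IsPerfectMatching ∧
    (∀ i, IsCycleSub (f i) (M.get i)) ∧
    (∀ i j, i ≠ j → Disjoint (f i).edgeSet (f j).edgeSet) ∧
    (∀ i, Disjoint (f i).edgeSet I.edgeSet) ∧
    ((⋃ i, (f i).edgeSet) ∪ I.edgeSet) = G.edgeSet

/-- An `(M)`-decomposition of the complete graph `K_n`: cycles only when `n` is odd
(`K_n` is an even graph), cycles plus a perfect matching when `n` is even. -/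
def KDecomp (n : ℕ) (M : List ℕ) : Prop :=
  (Odd n ∧ CycleDecomp (⊤ : SimpleGraph (Fin n)) M) ∨
  (Even n ∧ CycleDecompM (⊤ : SimpleGraph (Fin n)) M)

/-- A list `M` is `n`-admissible. -/
def Admissible (n : ℕ) (M : List ℕ) : Prop :=
  (∀ m ∈ M, 3 ≤ m ∧ m ≤ n) ∧ M.sum = n * ((n - 1) / 2)

/-- A list `M` is an `n`-ancestor list. -/
def AncestorList (n : ℕ) (M : List ℕ) : Prop :=
  Admissible n M ∧
  (∑ i ∈ Finset.Icc 6 (n - 1), M.count i) ≤ 1 ∧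
  (3 ≤ M.count 5 → (2 * M.count 4 : ℤ) ≤ (n : ℤ) - 6) ∧
  (2 ≤ M.count 5 → (3 * M.count 3 : ℤ) ≤ (n : ℤ) - 10) ∧
  (1 ≤ M.count 4 → 1 ≤ M.count 5 → (3 * M.count 3 : ℤ) ≤ (n : ℤ) - 9) ∧
  (1 ≤ M.count 4 → M.count (n - 2) = 0 ∧ M.count (n - 1) = 0) ∧
  (1 ≤ M.count 5 → M.count (n - 4) = 0 ∧ M.count (n - 3) = 0 ∧
    M.count (n - 2) = 0 ∧ M.count (n - 1) = 0)

/-!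
Write `n = 2s + 2`; for `n ≤ 6` the statement is degenerate or excluded by the ancestor
conditions. The hypothesis applied to the `2s`-admissible list `(s, M, 5^s)` decomposes `K_{2s}`
into a perfect matching, cycles of the lengths in `M`, `s` five-cycles and one `s`-cycle
`x₀ x₁ ⋯ x_{s-1}`. Let `z₀, …, z_{s-1}` be the remaining `s` vertices and add two new vertices
`a, b`. The `s` pentagons `a xₜ xₜ₊₁ b zₜ` use each edge of the `s`-cycle and each edge from `a`
or `b` to `K_{2s}` exactly once, so they replace the `s`-cycle, and the matching grows by `ab`.
-/

open SimpleGraph Function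

theorem SimpleGraph.Walk.IsCycle.isCycleSub_toSubgraph {V : Type*} {G : SimpleGraph V} {u : V}
    {p : G.Walk u u} (hp : p.IsCycle) : IsCycleSub p.toSubgraph p.length := by
  classical
  refine ⟨p.toSubgraph_connected.coe,
    fun v hv => hp.ncard_neighborSet_toSubgraph_eq_two (p.mem_verts_toSubgraph.mp hv), ?_⟩
  have : p.toSubgraph.edgeSet = (p.edges.toFinset : Set (Sym2 V)) := by ext; simp
  rw [this, Set.ncard_coe_finset, List.toFinset_card_of_nodup hp.edges_nodup, p.length_edges]

theorem SimpleGraph.Walk.getVert_finRotate {V : Type*} {G : SimpleGraph V} {u : V}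
    (p : G.Walk u u) {k : ℕ} (hk : p.length = k) (i : Fin k) :
    p.getVert (finRotate k i) = p.getVert (i + 1) := by
  obtain ⟨n, rfl⟩ : ∃ n, k = n + 1 := Nat.exists_eq_add_one.mpr (Fin.pos i)
  rw [coe_finRotate]
  split_ifs with h
  · rw [h, Fin.val_last, ← hk, Walk.getVert_zero, Walk.getVert_length]
  · rfl

namespace IsCycleSub

variable {V W : Type*} {G : SimpleGraph V} {H : G.Subgraph} {k : ℕ}

theorem mem_verts_iff (hH : IsCycleSub H k) {v : V} : v ∈ H.verts ↔ ∃ w, H.Adj v w := by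
  refine ⟨fun hv => ?_, fun ⟨w, hw⟩ => H.edge_vert hw⟩
  exact Set.nonempty_of_ncard_ne_zero (s := H.neighborSet v) (by rw [hH.2.1 v hv]; norm_num)

theorem exists_isCycle_toSubgraph_eq [Finite V] (hH : IsCycleSub H k) :
    ∃ (u : V) (p : G.Walk u u), p.IsCycle ∧ p.length = k ∧ p.toSubgraph = H := by
  classical
  have : Fintype V := Fintype.ofFinite V
  have hcyc : H.spanningCoe.IsCycles := fun v ⟨w, hw⟩ => hH.2.1 v (H.edge_vert hw)
  obtain ⟨⟨u, hu⟩⟩ := hH.1.nonempty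
  obtain ⟨p, hp, hpverts⟩ := hcyc.exists_cycle_toSubgraph_verts_eq_connectedComponentSupp
    (c := H.spanningCoe.connectedComponentMk u) rfl (hH.mem_verts_iff.mp hu)
  have hverts : ∀ v ∈ H.verts, v ∈ p.toSubgraph.verts := fun v hv => by
    rw [hpverts, ConnectedComponent.mem_supp_iff, ConnectedComponent.eq]
    exact (hH.1 ⟨v, hv⟩ ⟨u, hu⟩).map ⟨Subtype.val, id⟩
  set q := p.mapLe H.spanningCoe_le
  have hq : q.IsCycle := hp.mapLe _
  -- Both `q.toSubgraph` and `H` are 2-regular at every vertex of `q`, which is all of `H`.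
  have hadj : ∀ v w, q.toSubgraph.Adj v w ↔ H.Adj v w := fun v w => by
    rw [Walk.adj_toSubgraph_mapLe]
    refine ⟨fun h => p.toSubgraph.adj_sub h, fun h => ?_⟩
    exact (hp.adj_toSubgraph_iff_of_isCycles hcyc (hverts v (H.edge_vert h)) w).mpr h
  have hqH : q.toSubgraph = H := by
    ext v w
    · simp only [hq.isCycleSub_toSubgraph.mem_verts_iff, hH.mem_verts_iff, hadj]
    · exact hadj v w
  refine ⟨u, q, hq, ?_, hqH⟩
  rw [← hH.2.2, ← hq.isCycleSub_toSubgraph.2.2, hqH]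

theorem map [Finite V] {G' : SimpleGraph W} (f : G ↪g G') (hH : IsCycleSub H k) :
    IsCycleSub (H.map f.toHom) k := by
  obtain ⟨u, p, hp, rfl, rfl⟩ := hH.exists_isCycle_toSubgraph_eq
  rw [← Walk.toSubgraph_map, ← p.length_map f.toHom]
  exact (hp.map f.injective).isCycleSub_toSubgraph

theorem exists_cyclic_enumeration [Finite V] (hH : IsCycleSub H k) :
    ∃ x : Fin k → V, Injective x ∧ Injective (fun i => s(x i, x (finRotate k i))) ∧
      H.edgeSet = Set.range (fun i => s(x i, x (finRotate k i))) := by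
  obtain ⟨u, p, hp, rfl, rfl⟩ := hH.exists_isCycle_toSubgraph_eq
  have hedge : ∀ i : Fin p.length,
      s(p.getVert i, p.getVert (finRotate p.length i)) = p.edges[(i : ℕ)]'(by simp) := fun i => by
    rw [Walk.getElem_edges, p.getVert_finRotate rfl]
  refine ⟨fun i => p.getVert i, fun i j hij => ?_, fun i j hij => ?_, ?_⟩
  · have := hp.three_le_length
    exact Fin.ext (hp.getVert_injOn' (by simp; omega) (by simp; omega) hij)
  · simp only [hedge] at hij
    exact Fin.ext (hp.edges_nodup.getElem_inj_iff.mp hij)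
  · ext e
    simp only [Walk.edgeSet_toSubgraph, Walk.mem_edgeSet, hedge, List.mem_iff_getElem,
      Set.mem_range]
    constructor
    · rintro ⟨i, hi, rfl⟩
      exact ⟨⟨i, by simpa using hi⟩, rfl⟩
    · rintro ⟨i, rfl⟩
      exact ⟨i, by simp, rfl⟩

end IsCycleSub

namespace SimpleGraph

variable {V W : Type*}

def fiveCycleWalk : (⊤ : SimpleGraph (Fin 5)).Walk 0 0 :=
  .cons (by decide : (0 : Fin 5) ≠ 1) <| .cons (by decide : (1 : Fin 5) ≠ 2) <|
    .cons (by decide : (2 : Fin 5) ≠ 3) <| .cons (by decide : (3 : Fin 5) ≠ 4) <|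
    .cons (by decide : (4 : Fin 5) ≠ 0) .nil

theorem fiveCycleWalk_isCycle : fiveCycleWalk.IsCycle := by
  rw [Walk.isCycle_def, Walk.isTrail_def]
  exact ⟨by decide, by simp [fiveCycleWalk], by decide⟩

def fiveCycle (f : Fin 5 ↪ W) : (⊤ : SimpleGraph W).Subgraph :=
  fiveCycleWalk.toSubgraph.map (Embedding.completeGraph f).toHom

theorem isCycleSub_fiveCycle (f : Fin 5 ↪ W) : IsCycleSub (fiveCycle f) 5 :=
  fiveCycleWalk_isCycle.isCycleSub_toSubgraph.map (Embedding.completeGraph f)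

theorem edgeSet_fiveCycle (f : Fin 5 ↪ W) : (fiveCycle f).edgeSet =
    {s(f 0, f 1), s(f 1, f 2), s(f 2, f 3), s(f 3, f 4), s(f 4, f 0)} := by
  have : fiveCycleWalk.edgeSet = {s(0, 1), s(1, 2), s(2, 3), s(3, 4), s(4, 0)} := by
    ext; simp [Walk.edgeSet, fiveCycleWalk]
  simp [fiveCycle, this, Set.image_insert_eq]

abbrev Embedding.someSome : (⊤ : SimpleGraph V) ↪g (⊤ : SimpleGraph (Option (Option V))) :=
  Embedding.completeGraph (Function.Embedding.some.trans Function.Embedding.some)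

theorem Subgraph.IsPerfectMatching.map_someSome_sup {I : (⊤ : SimpleGraph V).Subgraph}
    (hI : I.IsPerfectMatching) : (I.map Embedding.someSome.toHom ⊔
      (⊤ : SimpleGraph (Option (Option V))).subgraphOfAdj
        (by simp : none ≠ some none)).IsPerfectMatching := by
  have hmap := hI.1.map Embedding.someSome.toHom Embedding.someSome.injective
  refine ⟨hmap.sup (.subgraphOfAdj _) ?_, fun v => ?_⟩
  · rw [hmap.support_eq_verts, (Subgraph.IsMatching.subgraphOfAdj _).support_eq_verts]
    simp [Set.disjoint_left]
  · rcases v with _ | _ | v <;> simp [hI.2 _]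

end SimpleGraph

theorem Function.Injective.exists_isCompl_range {V : Type*} [Fintype V] {s k : ℕ}
    (hV : Fintype.card V = s + k) {x : Fin s → V} (hx : Injective x) :
    ∃ z : Fin k → V, Injective z ∧ IsCompl (Set.range x) (Set.range z) := by
  classical
  have hcard : Fintype.card {v // v ∉ Set.range x} = k := by
    rw [Fintype.card_subtype_compl, ← Set.toFinset_card, Set.toFinset_range,
      Finset.card_image_of_injective _ hx, Finset.card_univ, Fintype.card_fin, hV]
    omega
  set e := Fintype.equivFinOfCardEq hcard
  have hrange : Set.range (fun t => (e.symm t).1) = (Set.range x)ᶜ := by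
    ext v
    exact ⟨fun ⟨t, ht⟩ => ht ▸ (e.symm t).2, fun hv => ⟨e ⟨v, hv⟩, by simp⟩⟩
  exact ⟨_, Subtype.val_injective.comp e.symm.injective, hrange ▸ isCompl_compl⟩

theorem List.exists_bijective_of_map_univ_eq {ι α : Type*} [Fintype ι] {L : List α}
    (len : ι → α) (h : Finset.univ.val.map len = (L : Multiset α)) :
    ∃ e : Fin L.length → ι, Bijective e ∧ ∀ j, len (e j) = L.get j := by
  classical
  set l := (Finset.univ : Finset ι).toList
  have hperm : L.Perm (l.map len) := by
    rw [← Multiset.coe_eq_coe, ← Multiset.map_coe, Finset.coe_toList, h]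
  have hlen : L.length = l.length := by simpa using hperm.length_eq
  refine ⟨fun j => l[(hperm.idxBij j : ℕ)]'((hperm.idxBij j).isLt.trans_eq (List.length_map _)),
    (Fintype.bijective_iff_injective_and_card _).mpr ⟨fun i j hij => ?_, by simp [hlen, l]⟩,
    fun j => ?_⟩
  · have := (Finset.nodup_toList _).getElem_inj_iff.mp hij
    exact hperm.idxBij_injective (Fin.ext (by simpa using this))
  · rw [List.get_eq_getElem, ← hperm.getElem_idxBij_eq_getElem j, List.getElem_map]

namespace CycleDecompM

variable {V W : Type*}

theorem of_fintype {ι : Type*} [Fintype ι] {G : SimpleGraph V} {L : List ℕ}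
    (len : ι → ℕ) (hlen : Finset.univ.val.map len = (L : Multiset ℕ))
    (f : ι → G.Subgraph) (I : G.Subgraph) (hI : I.IsPerfectMatching)
    (hf : ∀ i, IsCycleSub (f i) (len i))
    (hdisj : Pairwise fun i j => Disjoint (f i).edgeSet (f j).edgeSet)
    (hfI : ∀ i, Disjoint (f i).edgeSet I.edgeSet)
    (hcover : (⋃ i, (f i).edgeSet) ∪ I.edgeSet = G.edgeSet) : CycleDecompM G L := by
  obtain ⟨e, he, hlen⟩ := List.exists_bijective_of_map_univ_eq len hlen
  refine ⟨f ∘ e, I, hI, fun j => hlen j ▸ hf (e j), fun i j hij => hdisj (he.1.ne hij),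
    fun j => hfI (e j), ?_⟩
  rw [← hcover, comp_def, he.2.iUnion_comp fun i => (f i).edgeSet]

theorem of_iso [Finite V] {G : SimpleGraph V} {G' : SimpleGraph W} (e : G ≃g G')
    {L : List ℕ} (h : CycleDecompM G L) : CycleDecompM G' L := by
  obtain ⟨f, I, hI, hf, hdisj, hfI, hcover⟩ := h
  have himage : ∀ H : G.Subgraph, (H.map e.toHom).edgeSet = Sym2.map e '' H.edgeSet := by
    simp
  have hinj : Injective (Sym2.map e) := Sym2.map.injective e.injective
  have hG : Sym2.map e '' G.edgeSet = G'.edgeSet := by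
    refine subset_antisymm e.toHom.image_edgeSet_subset fun x hx => ?_
    refine ⟨Sym2.map e.symm x, e.symm.map_mem_edgeSet_iff.mpr hx, ?_⟩
    simp [Sym2.map_map]
  refine ⟨fun i => (f i).map e.toHom, I.map e.toHom,
    ⟨hI.1.map e.toHom e.injective, fun v => ⟨e.symm v, hI.2 _, e.apply_symm_apply v⟩⟩,
    fun i => (hf i).map e.toEmbedding, fun i j hij => ?_, fun i => ?_, ?_⟩
  · simpa only [himage] using (Set.disjoint_image_iff hinj).mpr (hdisj i j hij)
  · simpa only [himage] using (Set.disjoint_image_iff hinj).mpr (hfI i)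
  · simp only [himage, ← Set.image_iUnion, ← Set.image_union, hcover, hG]

end CycleDecompM

section Pentagons

variable {V : Type*} {s : ℕ} (x z : Fin s → V)

/-- The edges of the pentagon `a xₜ xₜ₊₁ b zₜ`, where the two new vertices `a` and `b` are
`none` and `some none`. -/
def pentagonEdges (t : Fin s) : Set (Sym2 (Option (Option V))) :=
  {s(none, some (some (x t))), s(some (some (x t)), some (some (x (finRotate s t)))),
    s(some (some (x (finRotate s t))), some none), s(some none, some (some (z t))),
    s(some (some (z t)), none)}

variable {x z}

theorem injective_sym2Map_someSome :
    Injective (Sym2.map (some ∘ some : V → Option (Option V))) :=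
  Sym2.map.injective ((Option.some_injective _).comp (Option.some_injective _))

theorem map_mem_pentagonEdges_iff {e : Sym2 V} {t : Fin s} :
    Sym2.map (some ∘ some) e ∈ pentagonEdges x z t ↔ e = s(x t, x (finRotate s t)) := by
  induction e using Sym2.ind with
  | h u v => simp [pentagonEdges]

theorem disjoint_image_pentagonEdges {S : Set (Sym2 V)}
    (hS : Disjoint (Set.range fun t => s(x t, x (finRotate s t))) S) (t : Fin s) :
    Disjoint (Sym2.map (some ∘ some) '' S) (pentagonEdges x z t) := by
  rw [Set.disjoint_left]
  rintro _ ⟨e, he, rfl⟩ hmem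
  exact Set.disjoint_left.mp hS ⟨t, (map_mem_pentagonEdges_iff.mp hmem).symm⟩ he

theorem none_some_notMem_pentagonEdges (t : Fin s) :
    s(none, some none) ∉ pentagonEdges x z t := by
  simp [pentagonEdges]

theorem injective_pentagon (hxz : Disjoint (Set.range x) (Set.range z))
    {t : Fin s} (ht : x t ≠ x (finRotate s t)) :
    Injective ![none, some (some (x t)), some (some (x (finRotate s t))), some none,
      some (some (z t))] := by
  have hxz' : ∀ t r, x t ≠ z r := fun t r => hxz.ne_of_mem ⟨t, rfl⟩ ⟨r, rfl⟩
  simp only [Matrix.vecCons, Fin.cons_injective_iff, Matrix.vecEmpty]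
  simpa [injective_of_subsingleton, hxz'] using ht

theorem pairwise_disjoint_pentagonEdges (hx : Injective x) (hz : Injective z)
    (hxz : Disjoint (Set.range x) (Set.range z))
    (hE : Injective fun t => s(x t, x (finRotate s t))) :
    Pairwise fun t r => Disjoint (pentagonEdges x z t) (pentagonEdges x z r) := by
  have hxz' : ∀ t r, x t ≠ z r := fun t r => hxz.ne_of_mem ⟨t, rfl⟩ ⟨r, rfl⟩
  intro t r htr
  refine Set.disjoint_left.mpr fun e h1 h2 => htr ?_
  simp only [pentagonEdges, Set.mem_insert_iff, Set.mem_singleton_iff] at h1 h2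
  rcases h1 with rfl | rfl | rfl | rfl | rfl <;> rcases h2 with h | h | h | h | h <;>
  first
    | exact hE (injective_sym2Map_someSome h)
    | simp [hx.eq_iff, hz.eq_iff, hxz', Ne.symm (hxz' _ _)] at h <;> exact h

theorem edgeSet_top_subset (hxz : IsCompl (Set.range x) (Set.range z)) :
    (⊤ : SimpleGraph (Option (Option V))).edgeSet ⊆ {s(none, some none)} ∪
      (⋃ t, pentagonEdges x z t) ∪ Sym2.map (some ∘ some) '' (⊤ : SimpleGraph V).edgeSet := by
  have hcross : ∀ v, (∃ t, s(none, some (some v)) ∈ pentagonEdges x z t) ∧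
      ∃ t, s(some none, some (some v)) ∈ pentagonEdges x z t := fun v => by
    have hv : v ∈ Set.range x ⊔ Set.range z := hxz.sup_eq_top.symm ▸ Set.mem_univ v
    rcases hv with ⟨t, rfl⟩ | ⟨t, rfl⟩
    · refine ⟨⟨t, by simp [pentagonEdges]⟩, ?_⟩
      obtain ⟨r, rfl⟩ := (finRotate s).surjective t
      exact ⟨r, by simp [pentagonEdges, Sym2.eq_swap]⟩
    · exact ⟨⟨t, by simp [pentagonEdges, Sym2.eq_swap]⟩, ⟨t, by simp [pentagonEdges]⟩⟩
  intro e he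
  induction e using Sym2.ind with
  | h u v =>
    simp only [Set.mem_union, Set.mem_singleton_iff, Set.mem_iUnion]
    rcases u with _ | _ | u <;> rcases v with _ | _ | v
    · simp at he
    · exact .inl (.inl rfl)
    · exact .inl (.inr (hcross v).1)
    · exact .inl (.inl Sym2.eq_swap)
    · simp at he
    · exact .inl (.inr (hcross v).2)
    · exact .inl (.inr (Sym2.eq_swap (a := none) ▸ (hcross u).1))
    · exact .inl (.inr (Sym2.eq_swap (a := some none) ▸ (hcross u).2))
    · exact .inr ⟨s(u, v), by simpa using he, rfl⟩

/-- Lifting an edge partition of `K_V` whose block `S 0` is the cycle `x`: the other blocks are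
kept and `S 0` is replaced by the pentagons. -/
def liftedEdges {n : ℕ} (S : Fin (n + 1) → Set (Sym2 V)) (x z : Fin s → V) :
    Fin n ⊕ Fin s → Set (Sym2 (Option (Option V))) :=
  Sum.elim (fun i => Sym2.map (some ∘ some) '' S i.succ) (pentagonEdges x z)

variable {n : ℕ} {S : Fin (n + 1) → Set (Sym2 V)} {T : Set (Sym2 V)}

theorem pairwise_disjoint_liftedEdges
    (hS0 : S 0 = Set.range fun t => s(x t, x (finRotate s t)))
    (hS : Pairwise fun i j => Disjoint (S i) (S j))
    (hx : Injective x) (hz : Injective z) (hxz : Disjoint (Set.range x) (Set.range z))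
    (hE : Injective fun t => s(x t, x (finRotate s t))) :
    Pairwise fun o o' => Disjoint (liftedEdges S x z o) (liftedEdges S x z o') := by
  rintro (i | t) (j | r) hne <;> simp only [liftedEdges, Sum.elim_inl, Sum.elim_inr]
  · exact (Set.disjoint_image_iff injective_sym2Map_someSome).mpr
      (hS (Fin.succ_injective _ |>.ne fun h => hne (congrArg _ h)))
  · exact disjoint_image_pentagonEdges (hS0 ▸ hS (Fin.succ_ne_zero i).symm) r
  · exact (disjoint_image_pentagonEdges (hS0 ▸ hS (Fin.succ_ne_zero j).symm) t).symm
  · exact pairwise_disjoint_pentagonEdges hx hz hxz hE fun h => hne (congrArg _ h)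

theorem disjoint_liftedEdges_matching
    (hS0 : S 0 = Set.range fun t => s(x t, x (finRotate s t)))
    (hST : ∀ j, Disjoint (S j) T) (o : Fin n ⊕ Fin s) :
    Disjoint (liftedEdges S x z o) (Sym2.map (some ∘ some) '' T ∪ {s(none, some none)}) := by
  rcases o with i | t <;>
    simp only [liftedEdges, Sum.elim_inl, Sum.elim_inr, Set.disjoint_union_right]
  · refine ⟨(Set.disjoint_image_iff injective_sym2Map_someSome).mpr (hST _), ?_⟩
    simp only [Set.disjoint_singleton_right, Set.mem_image, not_exists, not_and]
    intro e _
    induction e using Sym2.ind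
    simp
  · exact ⟨(disjoint_image_pentagonEdges (hS0 ▸ hST 0) t).symm,
      Set.disjoint_singleton_right.mpr (none_some_notMem_pentagonEdges t)⟩

theorem edgeSet_top_subset_liftedEdges
    (hS0 : S 0 = Set.range fun t => s(x t, x (finRotate s t)))
    (hcover : (⋃ j, S j) ∪ T = (⊤ : SimpleGraph V).edgeSet)
    (hxz : IsCompl (Set.range x) (Set.range z)) :
    (⊤ : SimpleGraph (Option (Option V))).edgeSet ⊆
      (⋃ o, liftedEdges S x z o) ∪ (Sym2.map (some ∘ some) '' T ∪ {s(none, some none)}) := by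
  intro e he
  simp only [Set.iUnion_sum, liftedEdges, Sum.elim_inl, Sum.elim_inr]
  rcases edgeSet_top_subset hxz he with (rfl | he) | ⟨e, he', rfl⟩
  · exact .inr (.inr rfl)
  · exact .inl (.inr he)
  rw [← hcover] at he'
  rcases he' with he | he
  · obtain ⟨j, hj⟩ := Set.mem_iUnion.mp he
    cases j using Fin.cases with
    | zero =>
      obtain ⟨t, rfl⟩ := hS0 ▸ hj
      exact .inl (.inr (Set.mem_iUnion.mpr ⟨t, map_mem_pentagonEdges_iff.mpr rfl⟩))
    | succ i => exact .inl (.inl (Set.mem_iUnion.mpr ⟨i, e, hj, rfl⟩))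
  · exact .inr (.inl ⟨e, he, rfl⟩)

end Pentagons

theorem CycleDecompM.replace_cycle_by_pentagons {V : Type*} [Fintype V] {s : ℕ} {l : List ℕ}
    (hV : Fintype.card V = 2 * s) (h : CycleDecompM (⊤ : SimpleGraph V) (s :: l)) :
    CycleDecompM (⊤ : SimpleGraph (Option (Option V))) (l ++ List.replicate s 5) := by
  obtain ⟨g, I, hI, hg, hgdisj, hgI, hgcover⟩ := h
  have hg0 : IsCycleSub (g 0) s := hg 0
  obtain ⟨x, hx, hxE, hx0⟩ := hg0.exists_cyclic_enumeration
  obtain ⟨z, hz, hxz⟩ := hx.exists_isCompl_range (k := s) (by omega)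
  have hxrot : ∀ t, x t ≠ x (finRotate s t) := fun t => by
    simpa using (g 0).edgeSet_subset (hx0 ▸ ⟨t, rfl⟩ : s(x t, x (finRotate s t)) ∈ _)
  set F := Sum.elim (fun i : Fin l.length => (g i.succ).map Embedding.someSome.toHom)
    fun t => fiveCycle ⟨_, injective_pentagon hxz.disjoint (hxrot t)⟩
  set J := I.map Embedding.someSome.toHom ⊔
    (⊤ : SimpleGraph (Option (Option V))).subgraphOfAdj (by simp : none ≠ some none)
  have hF : ∀ o, (F o).edgeSet = liftedEdges (fun j => (g j).edgeSet) x z o := by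
    rintro (i | t)
    · simp [F, liftedEdges]
    · exact edgeSet_fiveCycle _
  have hJ : J.edgeSet = Sym2.map (some ∘ some) '' I.edgeSet ∪ {s(none, some none)} := by
    simp [J]
  refine .of_fintype (Sum.elim l.get fun _ => 5) ?_ F J hI.map_someSome_sup ?_ ?_ ?_ ?_
  · rw [← Finset.univ_disjSum_univ, Finset.disjSum, Multiset.map_disjSum]
    simp [← Multiset.coe_replicate]
  · rintro (i | t)
    · exact (hg i.succ).map _
    · exact isCycleSub_fiveCycle _
  · simpa only [hF] using pairwise_disjoint_liftedEdges hx0 hgdisj hx hz hxz.disjoint hxE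
  · simpa only [hF, hJ] using disjoint_liftedEdges_matching hx0 hgI
  · refine subset_antisymm (Set.union_subset (Set.iUnion_subset fun i => (F i).edgeSet_subset)
      J.edgeSet_subset) ?_
    simpa only [hF, hJ] using edgeSet_top_subset_liftedEdges hx0 hgcover hxz

theorem kDecomp_nil {n : ℕ} (hn : n = 0 ∨ n = 2) : KDecomp n [] := by
  refine Or.inr ⟨by rcases hn with rfl | rfl <;> decide, fun i => i.elim0, ⊤, ?_,
    fun i => i.elim0, fun i => i.elim0, fun i => i.elim0, by simp⟩
  rw [Subgraph.isPerfectMatching_iff]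
  rcases hn with rfl | rfl
  · exact fun v => v.elim0
  · intro v
    refine ⟨v + 1, by simp, fun w hw => ?_⟩
    simp only [Subgraph.top_adj, top_adj] at hw
    fin_cases v <;> fin_cases w <;> simp_all

theorem Admissible.eq_nil_of_le_two {n : ℕ} {L : List ℕ} (h : Admissible n L) (hn : n ≤ 2) :
    L = [] :=
  List.eq_nil_iff_forall_not_mem.mpr fun m hm => by have := h.1 m hm; omega

theorem Admissible.cons_append_replicate {s : ℕ} {M : List ℕ} (hs : 3 ≤ s)
    (h : Admissible (2 * s + 2) (M ++ List.replicate (2 * s) 5)) (hM : ∀ m ∈ M, m ≤ 2 * s) :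
    Admissible (2 * s) (s :: (M ++ List.replicate s 5)) := by
  obtain ⟨hmem, hsum⟩ := h
  refine ⟨fun m hm => ?_, ?_⟩
  · simp only [List.mem_cons, List.mem_append, List.mem_replicate] at hm
    rcases hm with rfl | hm | ⟨-, rfl⟩
    · omega
    · exact ⟨(hmem m (List.mem_append_left _ hm)).1, hM m hm⟩
    · omega
  · simp only [List.sum_append, List.sum_replicate, smul_eq_mul, List.sum_cons] at hsum ⊢
    rw [show (2 * s + 2 - 1) / 2 = s by omega] at hsum
    rw [show (2 * s - 1) / 2 = s - 1 by omega]
    zify [show 1 ≤ s by omega] at hsum ⊢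
    linarith

theorem AncestorList.admissible_cons_append_replicate {s : ℕ} {M : List ℕ} (hs : 1 ≤ s)
    (h : AncestorList (2 * s + 2) (M ++ List.replicate (2 * s) 5))
    (hno : M.count (2 * s + 2) = 0) :
    Admissible (2 * s) (s :: (M ++ List.replicate s 5)) := by
  obtain ⟨hadm, -, -, -, -, -, hfive⟩ := h
  have h5 : 5 ∈ M ++ List.replicate (2 * s) 5 :=
    List.mem_append_right _ (List.mem_replicate.mpr ⟨by omega, rfl⟩)
  obtain ⟨-, -, -, hn1⟩ := hfive (List.count_pos_iff.mpr h5)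
  -- `5 ≤ n` excludes `n = 4`, and for `n = 6` the forbidden length `n - 1` is `5`.
  have hs3 : 3 ≤ s := by
    have := (hadm.1 5 h5).2
    by_contra hs
    obtain rfl : s = 2 := by omega
    exact (List.count_pos_iff.mpr h5).ne' hn1
  refine hadm.cons_append_replicate hs3 fun m hm => ?_
  have hmn := (hadm.1 m (List.mem_append_left _ hm)).2
  have : m ≠ 2 * s + 2 - 1 := fun h => List.count_eq_zero.mp hn1 (h ▸ List.mem_append_left _ hm)
  have : m ≠ 2 * s + 2 := fun h => List.count_eq_zero.mp hno (h ▸ hm)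
  omega

/-- `n` even, many five-cycles, no Hamilton cycles. -/
theorem even_no_ham_many_fives (n : ℕ) (heven : Even n)
    (hind : ∀ M' : List ℕ, Admissible (n - 2) M' → KDecomp (n - 2) M')
    (M : List ℕ)
    (hanc : AncestorList n (M ++ List.replicate (n - 2) 5))
    (hno : M.count n = 0) :
    KDecomp n (M ++ List.replicate (n - 2) 5) := by
  obtain ⟨k, hk⟩ := heven
  rcases Nat.lt_or_ge n 3 with hn | hn
  · rw [hanc.1.eq_nil_of_le_two (by omega)]
    exact kDecomp_nil (by omega)
  obtain ⟨s, rfl⟩ : ∃ s, n = 2 * s + 2 := ⟨k - 1, by omega⟩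
  rw [show 2 * s + 2 - 2 = 2 * s by omega] at hind hanc ⊢
  rcases hind _ (hanc.admissible_cons_append_replicate (by omega) hno) with ⟨hodd, -⟩ | ⟨-, hdec⟩
  · exact absurd hodd (Nat.not_odd_iff_even.mpr (even_two_mul s))
  have := (hdec.replace_cycle_by_pentagons (by simp)).of_iso <| Iso.completeGraph
    ((finSuccEquiv (2 * s + 1)).trans (Equiv.optionCongr (finSuccEquiv (2 * s)))).symm
  rw [List.append_assoc, List.replicate_append_replicate, ← two_mul] at this
  exact Or.inr ⟨⟨s + 1, by ring⟩, this⟩
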